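/- arXiv:2201.03058 — 2 statements merged into one kernel-verified Lean document; each statement's English description precedes it below -/
import Mathlib

section
/- Let 1 ≤ s ≤ n, i ∈ W_{n,s} and d ≥ s + 1 − p_{λ^∨}(s). Then the polynomial e_d(u_{i_1} − 1, …, u_{i_s} − 1) − h_d(u_i) has total degree at most d − 1 and vanishes under the evaluation u_1 = ⋯ = u_n = 1. -/
open MvPolynomial Finset

/-- The `k`-th elementary symmetric polynomial in the variables indexed by `T ⊆ {1,…,n}`. -/
noncomputable def esymmOn (n : ℕ) (T : Finset (Fin n)) (k : ℕ) : MvPolynomial (Fin n) ℤ :=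
  ∑ A ∈ T.powersetCard k, ∏ i ∈ A, X i

/-- The dual-partition value `η_j = #{i : λ_i ≥ j}` (here `lam` is 0-indexed). -/
def eta (l : ℕ) (lam : ℕ → ℕ) (j : ℕ) : ℕ :=
  ((Finset.range l).filter fun i => j ≤ lam i).card

/-- `p_{λ^∨}(s) = η_{n-s+1} + ⋯ + η_n`. -/
def pdual (n l : ℕ) (lam : ℕ → ℕ) (s : ℕ) : ℕ :=
  ∑ j ∈ Finset.Icc (n - s + 1) n, eta l lam j

/-- The generator `h_d(u_i)` of the K-theoretic Tanisaki ideal, for index set `T` and `q`. -/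
noncomputable def hpoly (n : ℕ) (T : Finset (Fin n)) (q d : ℕ) : MvPolynomial (Fin n) ℤ :=
  if q = 0 then esymmOn n T d
  else ∑ k ∈ Finset.range (d + 1),
    MvPolynomial.C ((-1 : ℤ) ^ (d - k) * ((q + d - k - 1).choose (q - 1) : ℤ)) * esymmOn n T k

/-- The K-theoretic Tanisaki ideal `𝓘_λ`. -/
noncomputable def KTanisaki (n l : ℕ) (lam : ℕ → ℕ) : Ideal (MvPolynomial (Fin n) ℤ) :=
  Ideal.span {p | ∃ s : ℕ, 1 ≤ s ∧ s ≤ n ∧ ∃ T : Finset (Fin n), T.card = s ∧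
    ∃ d : ℕ, s + 1 - pdual n l lam s ≤ d ∧ p = hpoly n T (pdual n l lam s) d}

/-- The (cohomological) Tanisaki ideal `I_λ`. -/
noncomputable def Tanisaki (n l : ℕ) (lam : ℕ → ℕ) : Ideal (MvPolynomial (Fin n) ℤ) :=
  Ideal.span {p | ∃ s : ℕ, 1 ≤ s ∧ s ≤ n ∧ ∃ T : Finset (Fin n), T.card = s ∧
    ∃ d : ℕ, s + 1 - pdual n l lam s ≤ d ∧ p = esymmOn n T d}

/-- The k-th elementary symmetric polynomial in the shifted variables
`u_i - 1` for i ∈ T. -/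
noncomputable def esymmShift (n : ℕ) (T : Finset (Fin n)) (k : ℕ) : MvPolynomial (Fin n) ℤ :=
  ∑ A ∈ T.powersetCard k, ∏ i ∈ A, (X i - 1)

private lemma core_binom (q' : ℕ) : ∀ r d : ℕ,
    ∑ j ∈ Finset.range (d+1), (-1:ℤ)^j * ((q'+j).choose q') * ((q'+1+r).choose (d-j))
      = (r.choose d : ℤ) := by
  induction q' with
  | zero =>
    intro r d
    induction d with
    | zero => simp
    | succ d ihd =>
      simp only [Nat.zero_add, Nat.choose_zero_right, Nat.cast_one, mul_one] at ihd ⊢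
      rw [Finset.sum_range_succ']
      have h1 : ∑ j ∈ Finset.range (d+1), (-1:ℤ)^(j+1) * ((1+r).choose (d+1-(j+1)))
          = -(r.choose d : ℤ) := by
        have h2 : ∑ j ∈ Finset.range (d+1), (-1:ℤ)^(j+1) * ((1+r).choose (d+1-(j+1)))
            = -∑ j ∈ Finset.range (d+1), (-1:ℤ)^j * ((1+r).choose (d-j)) := by
          rw [← Finset.sum_neg_distrib]
          apply Finset.sum_congr rfl
          intro j hj
          rw [show d+1-(j+1) = d-j from by omega, pow_succ]
          ring
        rw [h2, ihd]
      rw [h1]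
      have hp : ((r+1).choose (d+1) : ℤ) = (r.choose d : ℤ) + (r.choose (d+1) : ℤ) := by
        rw [← Nat.cast_add, ← Nat.choose_succ_succ]
      simp only [pow_zero, one_mul, Nat.sub_zero]
      rw [show 1+r = r+1 from Nat.add_comm 1 r, hp]
      ring
  | succ q' ih =>
    intro r d
    induction d with
    | zero => simp
    | succ d ihd =>
      have split : ∀ j : ℕ, (((q'+1+j).choose (q'+1) : ℤ))
          = ((q'+j).choose q' : ℤ) + ((q'+j).choose (q'+1) : ℤ) := by
        intro j
        rw [show q'+1+j = (q'+j)+1 from by omega, Nat.choose_succ_succ]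
        push_cast; ring
      have expand : ∑ j ∈ Finset.range (d+2),
          (-1:ℤ)^j * ((q'+1+j).choose (q'+1)) * ((q'+1+1+r).choose (d+1-j))
          = (∑ j ∈ Finset.range (d+2),
              (-1:ℤ)^j * ((q'+j).choose q') * ((q'+1+1+r).choose (d+1-j)))
          + ∑ j ∈ Finset.range (d+2),
              (-1:ℤ)^j * ((q'+j).choose (q'+1)) * ((q'+1+1+r).choose (d+1-j)) := by
        rw [← Finset.sum_add_distrib]
        apply Finset.sum_congr rfl
        intro j hj
        rw [split j]; ring
      have hA : ∑ j ∈ Finset.range (d+2),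
          (-1:ℤ)^j * ((q'+j).choose q') * ((q'+1+1+r).choose (d+1-j))
          = ((r+1).choose (d+1) : ℤ) := by
        have := ih (r+1) (d+1)
        rw [show q'+1+(r+1) = q'+1+1+r from by omega] at this
        exact this
      have hB : ∑ j ∈ Finset.range (d+2),
          (-1:ℤ)^j * ((q'+j).choose (q'+1)) * ((q'+1+1+r).choose (d+1-j))
          = -(r.choose d : ℤ) := by
        rw [Finset.sum_range_succ']
        have h0 : (-1:ℤ)^0 * ((q'+0).choose (q'+1)) * ((q'+1+1+r).choose (d+1-0)) = 0 := by
          simp [Nat.choose_eq_zero_of_lt (by omega : q'+0 < q'+1)]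
        rw [h0, add_zero]
        rw [← neg_neg (-(r.choose d : ℤ)), neg_neg, ← ihd, ← Finset.sum_neg_distrib]
        apply Finset.sum_congr rfl
        intro j hj
        rw [show q'+(j+1) = q'+1+j from by omega, show d+1-(j+1) = d-j from by omega,
          pow_succ]
        ring
      rw [expand, hA, hB]
      have : ((r+1).choose (d+1) : ℤ) = (r.choose d : ℤ) + (r.choose (d+1) : ℤ) := by
        rw [← Nat.cast_add, ← Nat.choose_succ_succ]
      omega

lemma pdual_le_aux (n l : ℕ) (lam : ℕ → ℕ) (hn : 1 ≤ n)
    (hmono : ∀ i j : ℕ, i ≤ j → lam j ≤ lam i)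
    (hsum : ∑ i ∈ Finset.range l, lam i = n)
    (s : ℕ) (hsn : s ≤ n) : pdual n l lam s ≤ s := by
  have hl : l ≠ 0 := by rintro rfl; simp at hsum; omega
  have hle : ∀ i ∈ Finset.range l, lam i ≤ n := by
    intro i hi
    calc lam i ≤ ∑ i ∈ Finset.range l, lam i :=
          Finset.single_le_sum (fun _ _ => Nat.zero_le _) hi
    _ = n := hsum
  have hswap : pdual n l lam s = ∑ i ∈ Finset.range l, (lam i - (n - s)) := by
    unfold pdual eta
    simp only [Finset.card_filter]
    rw [Finset.sum_comm]
    apply Finset.sum_congr rfl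
    intro i hi
    have hIcc : (Finset.Icc (n-s+1) n).filter (fun j => j ≤ lam i)
        = Finset.Icc (n-s+1) (lam i) := by
      ext j
      simp only [Finset.mem_filter, Finset.mem_Icc]
      have := hle i hi
      omega
    calc ∑ j ∈ Finset.Icc (n-s+1) n, (if j ≤ lam i then 1 else 0)
        = ((Finset.Icc (n-s+1) n).filter (fun j => j ≤ lam i)).card := by
          rw [Finset.card_filter]
      _ = (Finset.Icc (n-s+1) (lam i)).card := by rw [hIcc]
      _ = lam i - (n - s) := by rw [Nat.card_Icc]; omega
  rw [hswap]
  obtain ⟨l', rfl⟩ : ∃ l', l = l' + 1 := ⟨l - 1, by omega⟩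
  by_cases h0 : lam 0 ≤ n - s
  · have : ∀ i ∈ Finset.range (l'+1), lam i - (n-s) = 0 := by
      intro i _
      have := hmono 0 i (Nat.zero_le i)
      omega
    rw [Finset.sum_congr rfl this]
    simp
  · rw [Finset.sum_range_succ'] at hswap hsum ⊢
    have h1 : ∑ i ∈ Finset.range l', (lam (i+1) - (n-s))
        ≤ ∑ i ∈ Finset.range l', lam (i+1) :=
      Finset.sum_le_sum (fun _ _ => Nat.sub_le _ _)
    omega

lemma eval_one_esymmOn (n : ℕ) (T : Finset (Fin n)) (k : ℕ) :
    MvPolynomial.eval (fun _ => (1:ℤ)) (esymmOn n T k) = (T.card.choose k : ℤ) := by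
  unfold esymmOn
  rw [map_sum]
  simp only [MvPolynomial.eval_prod, MvPolynomial.eval_X]
  simp [Finset.card_powersetCard]

lemma eval_one_esymmShift (n : ℕ) (T : Finset (Fin n)) (k : ℕ) (hk : 1 ≤ k) :
    MvPolynomial.eval (fun _ => (1:ℤ)) (esymmShift n T k) = 0 := by
  unfold esymmShift
  rw [map_sum]
  apply Finset.sum_eq_zero
  intro A hA
  rw [Finset.mem_powersetCard] at hA
  obtain ⟨a, ha⟩ : A.Nonempty := Finset.card_pos.mp (by omega)
  rw [MvPolynomial.eval_prod]
  exact Finset.prod_eq_zero ha (by simp)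

lemma totalDegree_esymmOn_le (n : ℕ) (T : Finset (Fin n)) (k : ℕ) :
    (esymmOn n T k).totalDegree ≤ k := by
  unfold esymmOn
  apply MvPolynomial.totalDegree_finsetSum_le
  intro A hA
  rw [Finset.mem_powersetCard] at hA
  calc (∏ i ∈ A, (X i : MvPolynomial (Fin n) ℤ)).totalDegree
      ≤ ∑ i ∈ A, (X i : MvPolynomial (Fin n) ℤ).totalDegree :=
        MvPolynomial.totalDegree_finset_prod _ _
    _ = A.card := by simp [MvPolynomial.totalDegree_X]
    _ = k := hA.2

lemma totalDegree_prod_shift_le (n : ℕ) (A : Finset (Fin n)) :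
    (∏ i ∈ A, ((X i : MvPolynomial (Fin n) ℤ) - 1)).totalDegree ≤ A.card := by
  calc (∏ i ∈ A, ((X i : MvPolynomial (Fin n) ℤ) - 1)).totalDegree
      ≤ ∑ i ∈ A, ((X i : MvPolynomial (Fin n) ℤ) - 1).totalDegree :=
        MvPolynomial.totalDegree_finset_prod _ _
    _ ≤ ∑ i ∈ A, 1 := by
        apply Finset.sum_le_sum
        intro i _
        calc ((X i : MvPolynomial (Fin n) ℤ) - 1).totalDegree
            ≤ max (X i : MvPolynomial (Fin n) ℤ).totalDegree
                (1 : MvPolynomial (Fin n) ℤ).totalDegree :=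
              MvPolynomial.totalDegree_sub _ _
          _ ≤ 1 := by simp [MvPolynomial.totalDegree_X]
    _ = A.card := by simp

lemma totalDegree_prod_shift_sub_prod (n : ℕ) (A : Finset (Fin n)) :
    ((∏ i ∈ A, ((X i : MvPolynomial (Fin n) ℤ) - 1)) - ∏ i ∈ A, X i).totalDegree
      ≤ A.card - 1 := by
  induction A using Finset.induction with
  | empty => simp
  | @insert a A ha ih =>
    by_cases hA : A = ∅
    · subst hA
      simp only [Finset.insert_empty, Finset.prod_singleton]
      rw [show ((X a : MvPolynomial (Fin n) ℤ) - 1) - X a = -1 from by ring]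
      simp [MvPolynomial.totalDegree_neg]
    · have hcard : 1 ≤ A.card := Finset.card_pos.mpr (Finset.nonempty_of_ne_empty hA)
      rw [Finset.prod_insert ha, Finset.prod_insert ha]
      have key : ((X a - 1) * ∏ i ∈ A, ((X i : MvPolynomial (Fin n) ℤ) - 1))
          - (X a) * ∏ i ∈ A, X i
          = (X a) * ((∏ i ∈ A, ((X i : MvPolynomial (Fin n) ℤ) - 1)) - ∏ i ∈ A, X i)
            - ∏ i ∈ A, ((X i : MvPolynomial (Fin n) ℤ) - 1) := by ring
      rw [key, Finset.card_insert_of_notMem ha]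
      refine le_trans (MvPolynomial.totalDegree_sub _ _) (max_le ?_ ?_)
      · refine le_trans (MvPolynomial.totalDegree_mul _ _) ?_
        have h1 := ih
        have h2 := MvPolynomial.totalDegree_X (R := ℤ) a
        omega
      · have := totalDegree_prod_shift_le n A
        omega

/-- For 1 ≤ s ≤ n, i ∈ W_{n,s} and d ≥ s + 1 − p_{λ^∨}(s), the polynomial
e_d(u_{i_1} − 1, …, u_{i_s} − 1) − h_d(u_i) has total degree at most d − 1 and vanishes
under the evaluation u_1 = ⋯ = u_n = 1. -/
theorem esymmShift_sub_hpoly_totalDegree_le_and_eval_one_eq_zero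
    (n l : ℕ) (lam : ℕ → ℕ) (hn : 1 ≤ n)
    (hmono : ∀ i j : ℕ, i ≤ j → lam j ≤ lam i)
    (hpos : ∀ i < l, 0 < lam i) (hzero : ∀ i, l ≤ i → lam i = 0)
    (hsum : ∑ i ∈ Finset.range l, lam i = n)
    (s : ℕ) (hs1 : 1 ≤ s) (hsn : s ≤ n)
    (T : Finset (Fin n)) (hT : T.card = s)
    (d : ℕ) (hd : s + 1 - pdual n l lam s ≤ d) :
    (esymmShift n T d - hpoly n T (pdual n l lam s) d).totalDegree ≤ d - 1 ∧
    MvPolynomial.eval (fun _ => (1 : ℤ))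
      (esymmShift n T d - hpoly n T (pdual n l lam s) d) = 0 := by
  set q := pdual n l lam s with hqdef
  have hq_le : q ≤ s := pdual_le_aux n l lam hn hmono hsum s hsn
  clear hqdef
  clear_value q
  by_cases hq0 : q = 0
  · -- degenerate case: d ≥ s+1 > card T, everything is zero
    have hds : T.card < d := by rw [hT]; omega
    have hemp : T.powersetCard d = ∅ := Finset.powersetCard_eq_empty.mpr hds
    have h1 : esymmShift n T d = 0 := by unfold esymmShift; rw [hemp]; simp
    have h2 : hpoly n T q d = 0 := by
      unfold hpoly esymmOn; rw [if_pos hq0, hemp]; simp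
    rw [h1, h2]
    simp
  · have hq1 : 1 ≤ q := by omega
    have hd1 : 1 ≤ d := by omega
    have hcd : (-1:ℤ)^(d-d) * ((q+d-d-1).choose (q-1) : ℤ) = 1 := by
      rw [Nat.sub_self, show q+d-d-1 = q-1 from by omega]
      simp
    have hsplit : hpoly n T q d = esymmOn n T d +
        ∑ k ∈ Finset.range d,
          MvPolynomial.C ((-1 : ℤ) ^ (d - k) * ((q + d - k - 1).choose (q - 1) : ℤ))
            * esymmOn n T k := by
      unfold hpoly
      rw [if_neg hq0, Finset.sum_range_succ, hcd]
      rw [map_one, one_mul, add_comm]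
    constructor
    · have heq : esymmShift n T d - hpoly n T q d
          = (esymmShift n T d - esymmOn n T d) -
            ∑ k ∈ Finset.range d,
              MvPolynomial.C ((-1 : ℤ) ^ (d - k) * ((q + d - k - 1).choose (q - 1) : ℤ))
                * esymmOn n T k := by
        rw [hsplit]; ring
      rw [heq]
      refine le_trans (MvPolynomial.totalDegree_sub _ _) (max_le ?_ ?_)
      · unfold esymmShift esymmOn
        rw [← Finset.sum_sub_distrib]
        apply MvPolynomial.totalDegree_finsetSum_le
        intro A hA
        rw [Finset.mem_powersetCard] at hA
        have := totalDegree_prod_shift_sub_prod n A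
        omega
      · apply MvPolynomial.totalDegree_finsetSum_le
        intro k hk
        rw [Finset.mem_range] at hk
        refine le_trans (MvPolynomial.totalDegree_mul _ _) ?_
        have h1 := totalDegree_esymmOn_le n T k
        have h2 : (MvPolynomial.C ((-1 : ℤ) ^ (d - k) * ((q + d - k - 1).choose (q - 1) : ℤ))
            : MvPolynomial (Fin n) ℤ).totalDegree = 0 := MvPolynomial.totalDegree_C _
        omega
    · rw [map_sub, eval_one_esymmShift n T d hd1]
      have hev : MvPolynomial.eval (fun _ => (1:ℤ)) (hpoly n T q d)
          = ∑ k ∈ Finset.range (d+1),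
            (-1:ℤ)^(d-k) * ((q+d-k-1).choose (q-1) : ℤ) * (s.choose k : ℤ) := by
        unfold hpoly
        rw [if_neg hq0, map_sum]
        apply Finset.sum_congr rfl
        intro k _
        rw [map_mul, MvPolynomial.eval_C, eval_one_esymmOn, hT]
      obtain ⟨q', rfl⟩ : ∃ q', q = q' + 1 := ⟨q - 1, by omega⟩
      obtain ⟨r, hr⟩ : ∃ r, s = q' + 1 + r := ⟨s - (q'+1), by omega⟩
      have hrefl : ∑ k ∈ Finset.range (d+1),
          (-1:ℤ)^(d-k) * (((q'+1)+d-k-1).choose ((q'+1)-1) : ℤ) * (s.choose k : ℤ)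
          = ∑ j ∈ Finset.range (d+1),
            (-1:ℤ)^j * ((q'+j).choose q' : ℤ) * ((q'+1+r).choose (d-j) : ℤ) := by
        rw [← Finset.sum_range_reflect]
        apply Finset.sum_congr rfl
        intro j hj
        rw [Finset.mem_range] at hj
        rw [show d+1-1-j = d-j from by omega]
        rw [show d-(d-j) = j from by omega]
        rw [show (q'+1)+d-(d-j)-1 = q'+j from by omega]
        rw [show (q'+1)-1 = q' from by omega, ← hr]
      rw [hev, hrefl, core_binom q' r d]
      have : r < d := by omega
      rw [Nat.choose_eq_zero_of_lt this]
      simp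
end

section
/- For every k ≥ 1 there is an isomorphism of abelian groups S_k/I_{λ,k} ≅ R^k/((𝓘_λ ∩ R^k) + R^{k−1}), induced by the substitution y_j ↦ u_j − 1. -/
open MvPolynomial Finset

/-- `R^k`: the additive group of polynomials of total degree ≤ k vanishing at (1,…,1). -/
noncomputable def RkGrp (n k : ℕ) : AddSubgroup (MvPolynomial (Fin n) ℤ) where
  carrier := {p | p.totalDegree ≤ k ∧ MvPolynomial.eval (fun _ => (1 : ℤ)) p = 0}
  add_mem' := by
    intro a b ha hb
    exact ⟨le_trans (MvPolynomial.totalDegree_add a b) (max_le ha.1 hb.1), by simp [ha.2, hb.2]⟩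
  zero_mem' := by simp
  neg_mem' := by
    intro a ha
    exact ⟨by rw [MvPolynomial.totalDegree_neg]; exact ha.1, by simp [ha.2]⟩

/-- `S_k`: the additive group of homogeneous polynomials of degree k. -/
noncomputable def SkGrp (n k : ℕ) : AddSubgroup (MvPolynomial (Fin n) ℤ) :=
  (MvPolynomial.homogeneousSubmodule (Fin n) ℤ k).toAddSubgroup

/-- The substitution `y_j ↦ u_j − 1`. -/
noncomputable def substShift (n : ℕ) : MvPolynomial (Fin n) ℤ →+* MvPolynomial (Fin n) ℤ :=
  (MvPolynomial.bind₁ fun j : Fin n => (MvPolynomial.X j - 1 : MvPolynomial (Fin n) ℤ)).toRingHom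

/-
The substitution `φ : y ↦ u - 1` is a ring automorphism preserving total degree, and it maps
`I_λ` onto `𝓘_λ`: for a fixed index set `T`, `e_m(u_T - 1)` expands in the `e_i(u_T)` with
binomial coefficients, and by Vandermonde's identity `h_d(u_T)` is a unitriangular combination of
the `e_m(u_T - 1)`, with `m` running over exactly the degrees of the generators of `I_λ`.
The induced map `S_k → R^k / R^{k-1}` is onto because `f ∈ R^k` agrees modulo `R^{k-1}` with
`φ` of the degree-`k` part of `φ⁻¹ f`. It has kernel `I_{λ,k}` because `I_λ` is homogeneous: if
`φ p = φ x + g` with `x ∈ I_λ` and `deg g < k`, then `p` is the degree-`k` part of `x`.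
-/

theorem Finset.sum_powersetCard_sum_powersetCard {α M : Type*} [DecidableEq α] [AddCommMonoid M]
    (T : Finset α) {i m : ℕ} (him : i ≤ m) (g : Finset α → M) :
    ∑ A ∈ T.powersetCard m, ∑ B ∈ A.powersetCard i, g B
      = (#T - i).choose (m - i) • ∑ B ∈ T.powersetCard i, g B := by
  rw [smul_sum]
  refine (sum_comm' (t' := T.powersetCard i) (s' := fun B => (T.powersetCard m).filter (B ⊆ ·))
    ?_).trans (sum_congr rfl fun B hB => ?_)
  · intro A B
    simp only [mem_powersetCard, mem_filter]
    constructor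
    · rintro ⟨⟨hAT, hAm⟩, hBA, hBi⟩
      exact ⟨⟨⟨hAT, hAm⟩, hBA⟩, hBA.trans hAT, hBi⟩
    · rintro ⟨⟨⟨hAT, hAm⟩, hBA⟩, -, hBi⟩
      exact ⟨⟨hAT, hAm⟩, hBA, hBi⟩
  · obtain ⟨hBT, hBi⟩ := mem_powersetCard.1 hB
    rw [sum_const, card_filter_powersetCard_subset B T m hBT (hBi ▸ him), hBi]

theorem Int.sum_Ico_neg_one_pow_mul_choose_mul (N a i d : ℕ) (hid : i ≤ d) :
    ∑ m ∈ Ico i (d + 1),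
        (-1 : ℤ) ^ (d - m) * N.choose (d - m) * ((-1) ^ (m - i) * a.choose (m - i))
      = (-1) ^ (d - i) * (a + N).choose (d - i) := by
  rw [sum_Ico_eq_sum_range, show d + 1 - i = (d - i).succ by omega, Nat.add_choose_eq,
    Nat.sum_antidiagonal_eq_sum_range_succ (fun x y => a.choose x * N.choose y), Nat.cast_sum,
    mul_sum]
  refine sum_congr rfl fun j hj => ?_
  have hj : j ≤ d - i := Nat.lt_succ_iff.1 (mem_range.1 hj)
  rw [show d - (i + j) = d - i - j by omega, Nat.add_sub_cancel_left,
    show d - i = (d - i - j) + j by omega, pow_add, Nat.add_sub_cancel]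
  push_cast
  ring

theorem totalDegree_bind₁_le {σ τ R : Type*} [CommSemiring R] {g : σ → MvPolynomial τ R}
    (hg : ∀ i, (g i).totalDegree ≤ 1) (p : MvPolynomial σ R) :
    (bind₁ g p).totalDegree ≤ p.totalDegree := by
  conv_lhs => rw [p.as_sum, map_sum]
  refine totalDegree_finsetSum_le fun v hv => ?_
  rw [bind₁_monomial]
  refine (totalDegree_mul _ _).trans ?_
  rw [totalDegree_C, zero_add]
  refine (totalDegree_finsetProd _ _).trans ((sum_le_sum fun i _ => ?_).trans (le_totalDegree hv))
  exact (totalDegree_pow _ _).trans (by simpa using Nat.mul_le_mul_left (v i) (hg i))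

theorem totalDegree_sub_homogeneousComponent_le {σ R : Type*} [CommRing R]
    {p : MvPolynomial σ R} {k : ℕ} (hp : p.totalDegree ≤ k) :
    (p - homogeneousComponent k p).totalDegree ≤ k - 1 := by
  refine Finset.sup_le fun v hv => ?_
  rw [mem_support_iff, coeff_sub, coeff_homogeneousComponent] at hv
  split_ifs at hv with hvk
  · exact absurd (sub_self _) hv
  · have hv := (le_totalDegree (mem_support_iff.2 (by simpa using hv))).trans hp
    change v.degree ≤ k at hv
    change v.degree ≤ k - 1
    omega

theorem substShift_apply {n : ℕ} (p : MvPolynomial (Fin n) ℤ) :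
    substShift n p = bind₁ (fun j => X j - 1) p :=
  rfl

theorem substShift_X {n : ℕ} (i : Fin n) : substShift n (X i) = X i - 1 :=
  bind₁_X_right _ _

theorem esymmOn_eq_zero {n : ℕ} {T : Finset (Fin n)} {m : ℕ} (h : #T < m) :
    esymmOn n T m = 0 := by
  rw [esymmOn, powersetCard_eq_empty.2 h, sum_empty]

theorem esymmOn_isHomogeneous {n : ℕ} (T : Finset (Fin n)) (m : ℕ) :
    (esymmOn n T m).IsHomogeneous m :=
  IsHomogeneous.sum _ _ _ fun A hA => by
    simpa [(mem_powersetCard.1 hA).2] using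
      IsHomogeneous.prod A (fun i => X i) (fun _ => 1) fun i _ => isHomogeneous_X ℤ i

theorem substShift_esymmOn {n : ℕ} (T : Finset (Fin n)) (m : ℕ) :
    substShift n (esymmOn n T m) = ∑ i ∈ range (m + 1),
      C ((-1) ^ (m - i) * ((#T - i).choose (m - i) : ℤ)) * esymmOn n T i := by
  have hA : ∀ A ∈ T.powersetCard m, substShift n (∏ j ∈ A, X j) = ∑ i ∈ range (m + 1),
      ∑ B ∈ A.powersetCard i, C ((-1) ^ (m - i)) * ∏ j ∈ B, X j := by
    intro A hA
    obtain ⟨-, hAm⟩ := mem_powersetCard.1 hA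
    simp_rw [map_prod, substShift_X, sub_eq_add_neg, prod_add, sum_powerset, hAm]
    refine sum_congr rfl fun i _ => sum_congr rfl fun B hB => ?_
    obtain ⟨hBA, hBi⟩ := mem_powersetCard.1 hB
    rw [prod_const, card_sdiff_of_subset hBA, hAm, hBi, mul_comm]
    simp
  rw [esymmOn, map_sum, sum_congr rfl hA, sum_comm]
  refine sum_congr rfl fun i hi => ?_
  rw [sum_powersetCard_sum_powersetCard T (Nat.lt_succ_iff.1 (mem_range.1 hi)), ← mul_sum,
    nsmul_eq_mul, esymmOn, map_mul, map_natCast, mul_left_comm, mul_assoc]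

theorem hpoly_eq_sum_substShift_esymmOn {n : ℕ} (T : Finset (Fin n)) {q : ℕ} (hq : q ≠ 0)
    (d : ℕ) (hd : #T + 1 ≤ d + q) :
    hpoly n T q d = ∑ m ∈ range (d + 1),
      C ((-1) ^ (d - m) * ((d + q - (#T + 1)).choose (d - m) : ℤ)) *
        substShift n (esymmOn n T m) := by
  simp_rw [hpoly, if_neg hq, substShift_esymmOn, mul_sum, range_eq_Ico]
  rw [← sum_Ico_Ico_comm]
  refine sum_congr rfl fun i hi => ?_
  have hid : i ≤ d := Nat.lt_succ_iff.1 (mem_Ico.1 hi).2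
  simp_rw [← mul_assoc, ← map_mul, ← sum_mul, ← map_sum]
  by_cases hiT : i ≤ #T
  · rw [Int.sum_Ico_neg_one_pow_mul_choose_mul _ _ _ _ hid,
      Nat.choose_symm_of_eq_add (show q + d - i - 1 = (q - 1) + (d - i) by omega),
      show #T - i + (d + q - (#T + 1)) = q + d - i - 1 by omega]
  · rw [esymmOn_eq_zero (by omega), mul_zero, mul_zero]

theorem hpoly_eq_sum_Ico_substShift_esymmOn {n : ℕ} (T : Finset (Fin n)) (q d : ℕ)
    (hd : #T + 1 ≤ d + q) :
    hpoly n T q d = ∑ m ∈ Ico (#T + 1 - q) (d + 1),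
      C ((-1) ^ (d - m) * ((d + q - (#T + 1)).choose (d - m) : ℤ)) *
        substShift n (esymmOn n T m) := by
  rcases eq_or_ne q 0 with rfl | hq
  · rw [hpoly, if_pos rfl, esymmOn_eq_zero (by omega)]
    refine (sum_eq_zero fun m hm => ?_).symm
    rw [esymmOn_eq_zero (by simp at hm; omega), map_zero, mul_zero]
  · rw [hpoly_eq_sum_substShift_esymmOn T hq d hd,
      ← sum_range_add_sum_Ico _ (show #T + 1 - q ≤ d + 1 by omega), add_eq_right]
    refine sum_eq_zero fun m hm => ?_
    rw [Nat.choose_eq_zero_of_lt (by simp at hm; omega)]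
    simp

theorem KTanisaki_eq_map_Tanisaki (n l : ℕ) (lam : ℕ → ℕ) :
    KTanisaki n l lam = (Tanisaki n l lam).map (substShift n) := by
  apply le_antisymm
  · rw [KTanisaki, Ideal.span_le]
    rintro _ ⟨s, hs1, hsn, T, rfl, d, hd, rfl⟩
    rw [SetLike.mem_coe, hpoly_eq_sum_Ico_substShift_esymmOn T _ d (by omega)]
    exact Ideal.sum_mem _ fun m hm => Ideal.mul_mem_left _ _ <| Ideal.mem_map_of_mem _ <|
      Ideal.subset_span ⟨#T, hs1, hsn, T, rfl, m, (mem_Ico.1 hm).1, rfl⟩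
  · rw [Ideal.map_le_iff_le_comap, Tanisaki, Ideal.span_le]
    rintro _ ⟨s, hs1, hsn, T, rfl, d, hd, rfl⟩
    induction d using Nat.strong_induction_on with
    | _ d ih =>
      -- the expansion of `hpoly` is unitriangular: its top term is `substShift (esymmOn T d)`
      have h := hpoly_eq_sum_Ico_substShift_esymmOn T (pdual n l lam #T) d (by omega)
      rw [sum_Ico_succ_top hd, Nat.sub_self, Nat.choose_zero_right, pow_zero, one_mul,
        Nat.cast_one, map_one, one_mul, ← sub_eq_iff_eq_add'] at h
      rw [SetLike.mem_coe, Ideal.mem_comap, ← h]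
      refine sub_mem (Ideal.subset_span ⟨#T, hs1, hsn, T, rfl, d, hd, rfl⟩) <|
        Ideal.sum_mem _ fun m hm => Ideal.mul_mem_left _ _ ?_
      exact ih m (mem_Ico.1 hm).2 (mem_Ico.1 hm).1

theorem bind₁_X_add_one_substShift {n : ℕ} (p : MvPolynomial (Fin n) ℤ) :
    bind₁ (fun j => X j + 1) (substShift n p) = p := by
  rw [substShift_apply, bind₁_bind₁]
  simp

theorem substShift_bind₁_X_add_one {n : ℕ} (p : MvPolynomial (Fin n) ℤ) :
    substShift n (bind₁ (fun j => X j + 1) p) = p := by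
  rw [substShift_apply, bind₁_bind₁]
  simp

theorem totalDegree_substShift {n : ℕ} (p : MvPolynomial (Fin n) ℤ) :
    (substShift n p).totalDegree = p.totalDegree := by
  refine le_antisymm (totalDegree_bind₁_le (fun j => ?_) p) ?_
  · simpa using totalDegree_sub_C_le (X j : MvPolynomial (Fin n) ℤ) 1
  · conv_lhs => rw [← bind₁_X_add_one_substShift p]
    refine totalDegree_bind₁_le (fun j => ?_) _
    exact (totalDegree_add _ _).trans (by simp [totalDegree_X])

theorem eval_one_substShift {n : ℕ} (p : MvPolynomial (Fin n) ℤ) :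
    eval (fun _ => 1) (substShift n p) = constantCoeff p := by
  rw [substShift_apply, ← aeval_eq_eval, aeval_bind₁, aeval_eq_eval, ← eval_zero']
  simp

theorem substShift_mem_RkGrp {n k : ℕ} (hk : 1 ≤ k) {p : MvPolynomial (Fin n) ℤ}
    (hp : p.IsHomogeneous k) : substShift n p ∈ RkGrp n k := by
  refine ⟨(totalDegree_substShift p).trans_le hp.totalDegree_le, ?_⟩
  rw [eval_one_substShift, constantCoeff_eq]
  exact hp.coeff_eq_zero (by simp; omega)

theorem substShift_surjective (n : ℕ) : Function.Surjective (substShift n) :=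
  fun p => ⟨_, substShift_bind₁_X_add_one p⟩

theorem exists_isHomogeneous_sub_substShift_mem_RkGrp {n k : ℕ} (hk : 1 ≤ k)
    {f : MvPolynomial (Fin n) ℤ} (hf : f ∈ RkGrp n k) :
    ∃ h : MvPolynomial (Fin n) ℤ,
      h.IsHomogeneous k ∧ f - substShift n h ∈ RkGrp n (k - 1) := by
  obtain ⟨x, rfl⟩ := substShift_surjective n f
  have hx : x.totalDegree ≤ k := totalDegree_substShift x ▸ hf.1
  refine ⟨homogeneousComponent k x, homogeneousComponent_isHomogeneous k x, ?_, ?_⟩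
  · rw [← map_sub, totalDegree_substShift]
    exact totalDegree_sub_homogeneousComponent_le hx
  · rw [map_sub, hf.2, (substShift_mem_RkGrp hk (homogeneousComponent_isHomogeneous k x)).2,
      sub_zero]

section Homogeneous

attribute [local instance] MvPolynomial.gradedAlgebra

theorem Tanisaki_isHomogeneous (n l : ℕ) (lam : ℕ → ℕ) :
    (Tanisaki n l lam).IsHomogeneous (homogeneousSubmodule (Fin n) ℤ) :=
  Ideal.homogeneous_span _ _ <| by
    rintro _ ⟨s, -, -, T, -, d, -, rfl⟩
    exact ⟨d, esymmOn_isHomogeneous T d⟩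

theorem substShift_mem_sup_RkGrp_iff {n k : ℕ} {I : Ideal (MvPolynomial (Fin n) ℤ)}
    (hI : I.IsHomogeneous (homogeneousSubmodule (Fin n) ℤ)) (hk : 1 ≤ k)
    {p : MvPolynomial (Fin n) ℤ} (hp : p.IsHomogeneous k) :
    substShift n p ∈ ((I.map (substShift n)).toAddSubgroup ⊓ RkGrp n k) ⊔ RkGrp n (k - 1) ↔
      p ∈ I := by
  refine ⟨fun h => ?_, fun h => AddSubgroup.mem_sup_left ⟨Ideal.mem_map_of_mem _ h,
    substShift_mem_RkGrp hk hp⟩⟩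
  obtain ⟨_, ⟨hyI, -⟩, z, hz, hyz⟩ := AddSubgroup.mem_sup.1 h
  obtain ⟨x, hxI, rfl⟩ := (Ideal.mem_map_iff_of_surjective _ (substShift_surjective n)).1 hyI
  have hdeg : (p - x).totalDegree < k := by
    rw [← totalDegree_substShift, map_sub, ← hyz, add_sub_cancel_left]
    exact hz.1.trans_lt (by omega)
  have hpx : p = homogeneousComponent k x := by
    rw [← homogeneousComponent_eq_self hp, ← sub_eq_zero, ← map_sub]
    exact homogeneousComponent_eq_zero k _ hdeg
  exact hpx ▸ homogeneousComponent_mem_of_mem hI hxI k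

end Homogeneous

theorem homogeneous_quotient_addEquiv_filtered_quotient_general
    (n l : ℕ) (lam : ℕ → ℕ)
    (k : ℕ) (hk : 1 ≤ k) :
    ∃ φ : (SkGrp n k ⧸ (((Tanisaki n l lam).toAddSubgroup ⊓ SkGrp n k).addSubgroupOf (SkGrp n k)))
        ≃+ (RkGrp n k ⧸
            ((((KTanisaki n l lam).toAddSubgroup ⊓ RkGrp n k) ⊔ RkGrp n (k - 1)).addSubgroupOf
              (RkGrp n k))),
      ∀ (p : MvPolynomial (Fin n) ℤ) (hp : p ∈ SkGrp n k) (hq : substShift n p ∈ RkGrp n k),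
        φ (QuotientAddGroup.mk ⟨p, hp⟩) = QuotientAddGroup.mk ⟨substShift n p, hq⟩ := by
  let Φ : SkGrp n k →+ RkGrp n k ⧸ ((((KTanisaki n l lam).toAddSubgroup ⊓ RkGrp n k) ⊔
      RkGrp n (k - 1)).addSubgroupOf (RkGrp n k)) := (QuotientAddGroup.mk' _).comp <|
    ((substShift n).toAddMonoidHom.comp (SkGrp n k).subtype).codRestrict (RkGrp n k)
      fun p => substShift_mem_RkGrp hk p.2
  have hker :
      ((Tanisaki n l lam).toAddSubgroup ⊓ SkGrp n k).addSubgroupOf (SkGrp n k) = Φ.ker := by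
    ext ⟨p, hp⟩
    rw [AddMonoidHom.mem_ker, AddMonoidHom.comp_apply, QuotientAddGroup.mk'_apply,
      QuotientAddGroup.eq_zero_iff, AddSubgroup.mem_addSubgroupOf, AddSubgroup.mem_addSubgroupOf,
      AddSubgroup.mem_inf, KTanisaki_eq_map_Tanisaki]
    exact (and_iff_left hp).trans
      (substShift_mem_sup_RkGrp_iff (Tanisaki_isHomogeneous n l lam) hk hp).symm
  have hsurj : Function.Surjective Φ := by
    rintro ⟨⟨f, hf⟩⟩
    obtain ⟨h, hh, hfh⟩ := exists_isHomogeneous_sub_substShift_mem_RkGrp hk hf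
    refine ⟨⟨h, hh⟩, QuotientAddGroup.eq.2 ?_⟩
    rw [AddSubgroup.mem_addSubgroupOf]
    exact AddSubgroup.mem_sup_right (by simpa [neg_add_eq_sub] using hfh)
  exact ⟨(QuotientAddGroup.quotientAddEquivOfEq hker).trans
    (QuotientAddGroup.quotientKerEquivOfSurjective Φ hsurj), fun _ _ _ => rfl⟩

/-- For every k ≥ 1 there is an isomorphism of abelian groups
S_k/I_{λ,k} ≅ R^k/((𝓘_λ ∩ R^k) + R^{k−1}), induced by the substitution y_j ↦ u_j − 1. -/
theorem homogeneous_quotient_addEquiv_filtered_quotient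
    (n l : ℕ) (lam : ℕ → ℕ) (hn : 1 ≤ n)
    (hmono : ∀ i j : ℕ, i ≤ j → lam j ≤ lam i)
    (hpos : ∀ i < l, 0 < lam i) (hzero : ∀ i, l ≤ i → lam i = 0)
    (hsum : ∑ i ∈ Finset.range l, lam i = n)
    (k : ℕ) (hk : 1 ≤ k) :
    ∃ φ : (SkGrp n k ⧸ (((Tanisaki n l lam).toAddSubgroup ⊓ SkGrp n k).addSubgroupOf (SkGrp n k)))
        ≃+ (RkGrp n k ⧸
            ((((KTanisaki n l lam).toAddSubgroup ⊓ RkGrp n k) ⊔ RkGrp n (k - 1)).addSubgroupOf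
              (RkGrp n k))),
      ∀ (p : MvPolynomial (Fin n) ℤ) (hp : p ∈ SkGrp n k) (hq : substShift n p ∈ RkGrp n k),
        φ (QuotientAddGroup.mk ⟨p, hp⟩) = QuotientAddGroup.mk ⟨substShift n p, hq⟩ :=
  homogeneous_quotient_addEquiv_filtered_quotient_general n l lam k hk
end
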